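/- arXiv:1304.6035 — 3 statements merged into one kernel-verified Lean document; each statement's English description precedes it below -/
import Mathlib

section
/- Let (T, r) be a complete separable metric space, μ a Borel probability measure on T with separable support. Then for μ^⊗ℕ-almost every sequence (uₙ)ₙ∈ℕ, the empirical measures (1/n) ∑ᵢ₌₁ⁿ δ_{uᵢ} converge weakly to μ as n → ∞. -/
open MeasureTheory Filter

/-!
Varadarajan's argument. Let `B` be a countable basis of `T`. The finite unions of members of
`B` form a countable family, so by the strong law of large numbers applied to their indicators,
almost surely the empirical measures converge to `μ` on each of them simultaneously. Every open
set `G` is the directed union of the finite unions of basis sets contained in it, so continuity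
from below gives `μ G ≤ liminf νₙ G` for the empirical measures `νₙ`, and the portmanteau theorem
turns this into weak convergence.
-/

open scoped ENNReal Topology
open Finset TopologicalSpace

namespace MeasureTheory

section EmpiricalMeasure

variable {T : Type*} [MeasurableSpace T]

-- For `n = 0` this is `⊤ • 0 = 0`, so only `empiricalMeasure x (n + 1)` is a probability measure.
noncomputable def empiricalMeasure (x : ℕ → T) (n : ℕ) : Measure T :=
  (n : ℝ≥0∞)⁻¹ • ∑ i ∈ range n, Measure.dirac (x i)

instance (x : ℕ → T) (n : ℕ) : IsProbabilityMeasure (empiricalMeasure x (n + 1)) := by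
  constructor
  simp [empiricalMeasure, ENNReal.inv_mul_cancel]

lemma integral_empiricalMeasure (x : ℕ → T) (n : ℕ) {g : T → ℝ} (hg : StronglyMeasurable g) :
    ∫ y, g y ∂empiricalMeasure x n = (∑ i ∈ range n, g (x i)) / n := by
  rw [empiricalMeasure, integral_smul_measure,
    integral_finsetSum_measure fun i _ => integrable_dirac' hg enorm_lt_top]
  simp [integral_dirac' _ _ hg, div_eq_inv_mul]

lemma measureReal_empiricalMeasure (x : ℕ → T) (n : ℕ) {s : Set T} (hs : MeasurableSet s) :
    (empiricalMeasure x n).real s = (∑ i ∈ range n, s.indicator (1 : T → ℝ) (x i)) / n := by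
  rw [← integral_indicator_one hs,
    integral_empiricalMeasure x n (stronglyMeasurable_one.indicator hs)]

end EmpiricalMeasure

variable {T : Type*} [MeasurableSpace T] [TopologicalSpace T]

lemma le_liminf_measure_isOpen_of_tendsto_sUnion {μ : Measure T} {μs : ℕ → Measure T}
    {B : Set (Set T)} (hB : IsTopologicalBasis B) (hBc : B.Countable)
    (h : ∀ t ⊆ B, t.Finite → Tendsto (fun n => μs n (⋃₀ t)) atTop (𝓝 (μ (⋃₀ t))))
    {G : Set T} (hG : IsOpen G) :
    μ G ≤ atTop.liminf fun n => μs n G := by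
  set F := {t : Set (Set T) | t.Finite ∧ t ⊆ {s ∈ B | s ⊆ G}}
  have hG_eq : G = ⋃ t ∈ F, ⋃₀ t := by
    refine subset_antisymm (fun y hy => ?_) (Set.iUnion₂_subset fun t ht => ?_)
    · rw [hB.open_eq_sUnion' hG] at hy
      obtain ⟨s, hs, hys⟩ := hy
      exact Set.mem_biUnion (x := {s}) ⟨Set.finite_singleton s, by simpa using hs⟩ (by simpa)
    · exact Set.sUnion_subset fun s hs => (ht.2 hs).2
  have hF : F.Countable := Set.countable_ofPred_finite_subset (hBc.mono fun s hs => hs.1)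
  have hF_dir : DirectedOn (Function.onFun (· ⊆ ·) fun t : Set (Set T) => ⋃₀ t) F :=
    fun t ht t' ht' => ⟨t ∪ t', ⟨ht.1.union ht'.1, Set.union_subset ht.2 ht'.2⟩,
      Set.sUnion_mono Set.subset_union_left, Set.sUnion_mono Set.subset_union_right⟩
  rw [hG_eq, measure_biUnion_eq_iSup hF hF_dir]
  refine iSup₂_le fun t ht => ?_
  rw [← (h t (fun s hs => (ht.2 hs).1) ht.1).liminf_eq, ← hG_eq]
  exact liminf_le_liminf (Eventually.of_forall fun n =>
    measure_mono (Set.sUnion_subset fun s hs => (ht.2 hs).2))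

theorem tendsto_average_of_tendsto_average_indicator [OpensMeasurableSpace T]
    {μ : Measure T} [IsProbabilityMeasure μ]
    {B : Set (Set T)} (hB : IsTopologicalBasis B) (hBc : B.Countable) {x : ℕ → T}
    (hx : ∀ t ⊆ B, t.Finite → Tendsto
      (fun n : ℕ => (∑ i ∈ range n, (⋃₀ t).indicator (1 : T → ℝ) (x i)) / n) atTop
      (𝓝 (μ.real (⋃₀ t))))
    (f : BoundedContinuousFunction T ℝ) :
    Tendsto (fun n : ℕ => (∑ i ∈ range n, f (x i)) / n) atTop (𝓝 (∫ y, f y ∂μ)) := by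
  simp_rw [← integral_empiricalMeasure x _ f.continuous.stronglyMeasurable]
  rw [← tendsto_add_atTop_iff_nat 1]
  refine BoundedContinuousFunction.tendsto_integral_of_forall_integral_le_liminf_integral
    (fun g hg => integral_le_liminf_integral_of_forall_isOpen_measure_le_liminf_measure hg
      fun G hG => le_liminf_measure_isOpen_of_tendsto_sUnion hB hBc (fun t htB ht => ?_) hG) f
  have ht_meas : MeasurableSet (⋃₀ t) :=
    (isOpen_sUnion fun s hs => hB.isOpen (htB hs)).measurableSet
  rw [← ENNReal.tendsto_toReal_iff (fun _ => measure_ne_top _ _) (measure_ne_top _ _)]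
  simp_rw [← measureReal_def, measureReal_empiricalMeasure x _ ht_meas]
  exact (tendsto_add_atTop_iff_nat 1).2 (hx t htB ht)

end MeasureTheory

namespace ProbabilityTheory

variable {Ω T : Type*} [MeasurableSpace Ω] [MeasurableSpace T] {P : Measure Ω} {μ : Measure T}
  {u : ℕ → Ω → T}

lemma strong_law_ae_comp (hmeas : ∀ i, Measurable (u i))
    (hindep : Pairwise fun i j => IndepFun (u i) (u j) P) (hlaw : ∀ i, P.map (u i) = μ)
    {g : T → ℝ} (hg : Measurable g) (hgi : Integrable g μ) :
    ∀ᵐ ω ∂P, Tendsto (fun n : ℕ => (∑ i ∈ range n, g (u i ω)) / n) atTop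
      (𝓝 (∫ y, g y ∂μ)) := by
  have hident (i : ℕ) : IdentDistrib (g ∘ u i) (g ∘ u 0) P P :=
    (IdentDistrib.mk (hmeas i).aemeasurable (hmeas 0).aemeasurable
      ((hlaw i).trans (hlaw 0).symm)).comp hg
  have hint : Integrable (g ∘ u 0) P :=
    (integrable_map_measure hg.aestronglyMeasurable (hmeas 0).aemeasurable).1 (hlaw 0 ▸ hgi)
  have hmean : ∫ ω, g (u 0 ω) ∂P = ∫ y, g y ∂μ := by
    rw [← hlaw 0, integral_map (hmeas 0).aemeasurable hg.aestronglyMeasurable]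
  simpa [hmean] using strong_law_ae_real (fun i => g ∘ u i) hint
    (fun i j hij => (hindep hij).comp hg hg) hident

lemma strong_law_ae_indicator [IsFiniteMeasure μ] (hmeas : ∀ i, Measurable (u i))
    (hindep : Pairwise fun i j => IndepFun (u i) (u j) P) (hlaw : ∀ i, P.map (u i) = μ)
    {s : Set T} (hs : MeasurableSet s) :
    ∀ᵐ ω ∂P, Tendsto (fun n : ℕ => (∑ i ∈ range n, s.indicator (1 : T → ℝ) (u i ω)) / n) atTop
      (𝓝 (μ.real s)) := by
  simpa [integral_indicator_one hs] using
    strong_law_ae_comp hmeas hindep hlaw (measurable_one.indicator hs)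
      ((integrable_const 1).indicator hs)

end ProbabilityTheory

theorem empirical_measures_converge_weakly_general {T Ω : Type*}
    [MetricSpace T] [SecondCountableTopology T]
    [MeasurableSpace T] [BorelSpace T] [MeasurableSpace Ω]
    (P : Measure Ω) [IsProbabilityMeasure P]
    (μ : Measure T) [IsProbabilityMeasure μ]
    (u : ℕ → Ω → T) (hmeas : ∀ i, Measurable (u i))
    (hindep : ProbabilityTheory.iIndepFun u P)
    (hlaw : ∀ i, P.map (u i) = μ) :
    ∀ᵐ ω ∂P, ∀ f : BoundedContinuousFunction T ℝ,
      Tendsto (fun n : ℕ => (∑ i ∈ Finset.range n, f (u i ω)) / (n : ℝ))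
        atTop (nhds (∫ x, f x ∂μ)) := by
  have hB := isBasis_countableBasis T
  have hBc := countable_countableBasis T
  have hfreq : ∀ᵐ ω ∂P, ∀ t ∈ {t | t.Finite ∧ t ⊆ countableBasis T},
      Tendsto (fun n : ℕ => (∑ i ∈ range n, (⋃₀ t).indicator (1 : T → ℝ) (u i ω)) / n) atTop
        (𝓝 (μ.real (⋃₀ t))) := by
    refine (ae_ball_iff (Set.countable_ofPred_finite_subset hBc)).2 fun t ht => ?_
    exact ProbabilityTheory.strong_law_ae_indicator hmeas (fun _ _ hij => hindep.indepFun hij)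
      hlaw (isOpen_sUnion fun s hs => hB.isOpen (ht.2 hs)).measurableSet
  filter_upwards [hfreq] with ω hω f
  exact tendsto_average_of_tendsto_average_indicator hB hBc (fun t htB ht => hω t ⟨ht, htB⟩) f

/-- Varadarajan: for an i.i.d. sequence `(uₙ)` with common law `μ`
on a complete separable metric space, almost surely the empirical measures
`(1/n) ∑_{i<n} δ_{uᵢ}` converge weakly to `μ`, i.e. almost every sampled sequence
is `μ`-uniformly distributed. -/
theorem empirical_measures_converge_weakly {T Ω : Type*}
    [MetricSpace T] [CompleteSpace T] [SecondCountableTopology T]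
    [MeasurableSpace T] [BorelSpace T] [MeasurableSpace Ω]
    (P : Measure Ω) [IsProbabilityMeasure P]
    (μ : Measure T) [IsProbabilityMeasure μ]
    (u : ℕ → Ω → T) (hmeas : ∀ i, Measurable (u i))
    (hindep : ProbabilityTheory.iIndepFun u P)
    (hlaw : ∀ i, P.map (u i) = μ) :
    ∀ᵐ ω ∂P, ∀ f : BoundedContinuousFunction T ℝ,
      Tendsto (fun n : ℕ => (∑ i ∈ Finset.range n, f (u i ω)) / (n : ℝ))
        atTop (nhds (∫ x, f x ∂μ)) :=
  empirical_measures_converge_weakly_general P μ u hmeas hindep hlaw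
end

section
/- Let (T, r) and (T′, r′) be ℝ-trees with the same root-distance structure in the following sense: let A ⊆ T, A′ ⊆ T′, and let φ : A → A′ be a surjective isometry. For v ∈ span(A) (the smallest subtree of T containing A), choose x, y ∈ A with v ∈ [x, y], and let w_v be the unique point in [φ(x), φ(y)] with r(x, v) = r′(φ(x), w_v). Then w_v does not depend on the choice of x, y ∈ A with v ∈ [x,y], and the map v ↦ w_v is the unique isometric extension of φ to a map span(A) → span(A′). -/
open MeasureTheory Filter
open scoped ENNReal NNReal

/-- An ℝ-tree structure on a metric space: a choice of segments `seg x y` which are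
geodesic (isometric images of real intervals) and are the images of *all* injective
continuous arcs between their endpoints (unique arcwise connectedness). -/
class RTreeStruct (T : Type*) [MetricSpace T] where
  seg : T → T → Set T
  seg_geodesic : ∀ x y : T, ∃ γ : ℝ → T,
    (∀ s ∈ Set.Icc (0:ℝ) (dist x y), ∀ t ∈ Set.Icc (0:ℝ) (dist x y),
        dist (γ s) (γ t) = |s - t|)
    ∧ γ 0 = x ∧ γ (dist x y) = y ∧ seg x y = γ '' Set.Icc 0 (dist x y)
  arc_unique : ∀ x y : T, ∀ f : ℝ → T,
    ContinuousOn f (Set.Icc 0 1) → Set.InjOn f (Set.Icc 0 1) →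
    f 0 = x → f 1 = y → f '' Set.Icc 0 1 = seg x y

/-- The tree pruned at `v`: points `w` whose segment from the root `ρ` avoids `v`. -/
def pruned {T : Type*} [MetricSpace T] [RTreeStruct T] (ρ v : T) : Set T :=
  {w | v ∉ RTreeStruct.seg ρ w}

/-!
In an ℝ-tree, for any point `a` the segment `[x, y]` lies in `[x, a] ∪ [a, y]` (both contain the
branch point of the tripod `x, y, a`). Hence, for `v ∈ [x, y]`,
`d(a, v) = max (d(a, x) - d(x, v), d(a, y) - d(y, v))`,
and applying this twice, the distance between `v ∈ [x, y]` and `v' ∈ [x', y']` is a function of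
the distances among `x, y, x', y'` and of `d(x, v)`, `d(x', v')`. The isometry `φ` preserves all
of these, so `v ↦ w_v` is well defined and isometric. Conversely an isometric extension `ψ` puts
`ψ v` on `[φ x, φ y]` at distance `d(x, v)` from `φ x`, which forces `ψ v = w_v`.
-/

namespace RTreeStruct

open Set

section Geodesic

variable {T : Type*}

section concatPath

noncomputable def concatPath (f g : ℝ → T) (a t : ℝ) : T :=
  if t ≤ a then f t else g (t - a)

variable {f g : ℝ → T} {a b : ℝ}

lemma concatPath_of_le {t : ℝ} (ht : t ≤ a) : concatPath f g a t = f t := if_pos ht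

lemma concatPath_of_lt {t : ℝ} (ht : a < t) : concatPath f g a t = g (t - a) := if_neg ht.not_ge

lemma image_concatPath (ha : 0 ≤ a) (hb : 0 ≤ b) (hfg : f a = g 0) :
    concatPath f g a '' Icc 0 (a + b) = f '' Icc 0 a ∪ g '' Icc 0 b := by
  ext w
  constructor
  · rintro ⟨t, ht, rfl⟩
    rcases le_or_gt t a with hta | hta
    · exact Or.inl ⟨t, ⟨ht.1, hta⟩, (concatPath_of_le hta).symm⟩
    · exact Or.inr ⟨t - a, ⟨by linarith, by linarith [ht.2]⟩, (concatPath_of_lt hta).symm⟩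
  · rintro (⟨t, ht, rfl⟩ | ⟨t, ht, rfl⟩)
    · exact ⟨t, ⟨ht.1, by linarith [ht.2]⟩, concatPath_of_le ht.2⟩
    rcases ht.1.eq_or_lt with rfl | ht0
    · exact ⟨a, ⟨ha, by linarith⟩, (concatPath_of_le le_rfl).trans hfg⟩
    · exact ⟨a + t, ⟨by linarith, by linarith [ht.2]⟩,
        (concatPath_of_lt (by linarith)).trans (by rw [add_sub_cancel_left])⟩

end concatPath

variable [MetricSpace T]

def IsGeodesicOn (f : ℝ → T) (a : ℝ) : Prop :=
  ∀ s ∈ Icc 0 a, ∀ t ∈ Icc 0 a, dist (f s) (f t) = |s - t|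

namespace IsGeodesicOn

variable {f g : ℝ → T} {a b : ℝ}

lemma dist_apply_zero (hf : IsGeodesicOn f a) {t : ℝ} (ht : t ∈ Icc 0 a) :
    dist (f 0) (f t) = t := by
  rw [hf 0 (left_mem_Icc.2 (ht.1.trans ht.2)) t ht, zero_sub, abs_neg, abs_of_nonneg ht.1]

lemma dist_apply_right (hf : IsGeodesicOn f a) {t : ℝ} (ht : t ∈ Icc 0 a) :
    dist (f t) (f a) = a - t := by
  rw [hf t ht a (right_mem_Icc.2 (ht.1.trans ht.2)), abs_sub_comm,
    abs_of_nonneg (sub_nonneg.2 ht.2)]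

lemma lipschitzOnWith (hf : IsGeodesicOn f a) : LipschitzOnWith 1 f (Icc 0 a) :=
  LipschitzOnWith.mk_one fun s hs t ht => (hf s hs t ht).le

lemma injOn (hf : IsGeodesicOn f a) : InjOn f (Icc 0 a) := fun s hs t ht hst => by
  simpa [hst, sub_eq_zero, eq_comm] using hf s hs t ht

lemma mono (hf : IsGeodesicOn f a) (hba : b ≤ a) : IsGeodesicOn f b :=
  fun s hs t ht => hf s ⟨hs.1, hs.2.trans hba⟩ t ⟨ht.1, ht.2.trans hba⟩

lemma reverse (hf : IsGeodesicOn f a) : IsGeodesicOn (fun t => f (a - t)) a := by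
  intro s hs t ht
  rw [hf _ ⟨by linarith [hs.2], by linarith [hs.1]⟩ _ ⟨by linarith [ht.2], by linarith [ht.1]⟩,
    abs_sub_comm]
  ring_nf

lemma shift (hf : IsGeodesicOn f a) {c : ℝ} (hc : 0 ≤ c) :
    IsGeodesicOn (fun t => f (c + t)) (a - c) := by
  intro s hs t ht
  rw [hf _ ⟨by linarith [hs.1], by linarith [hs.2]⟩ _ ⟨by linarith [ht.1], by linarith [ht.2]⟩]
  ring_nf

lemma lipschitzOnWith_concatPath (hf : IsGeodesicOn f a) (hg : IsGeodesicOn g b)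
    (hfg : f a = g 0) : LipschitzOnWith 1 (concatPath f g a) (Icc 0 (a + b)) := by
  refine LipschitzOnWith.mk_one fun s hs t ht => ?_
  wlog hst : s ≤ t generalizing s t
  · rw [dist_comm, dist_comm s]
    exact this t ht s hs (le_of_not_ge hst)
  rw [Real.dist_eq, abs_sub_comm, abs_of_nonneg (sub_nonneg.2 hst)]
  rcases le_or_gt t a with hta | hta
  · rw [concatPath_of_le hta, concatPath_of_le (hst.trans hta),
      hf s ⟨hs.1, hst.trans hta⟩ t ⟨ht.1, hta⟩, abs_sub_comm, abs_of_nonneg (sub_nonneg.2 hst)]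
  have ht' : t - a ∈ Icc 0 b := ⟨by linarith, by linarith [ht.2]⟩
  rw [concatPath_of_lt hta]
  rcases le_or_gt s a with hsa | hsa
  · rw [concatPath_of_le hsa]
    calc dist (f s) (g (t - a)) ≤ dist (f s) (f a) + dist (g 0) (g (t - a)) :=
          hfg ▸ dist_triangle _ _ _
      _ = t - s := by
          rw [hf.dist_apply_right ⟨hs.1, hsa⟩, hg.dist_apply_zero ht']
          ring
  · rw [concatPath_of_lt hsa, hg _ ⟨by linarith, by linarith [hs.2]⟩ _ ht', abs_sub_comm,
      abs_of_nonneg (by linarith)]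
    linarith

lemma injOn_concatPath (hf : IsGeodesicOn f a) (hg : IsGeodesicOn g b)
    (hinter : f '' Icc 0 a ∩ g '' Icc 0 b ⊆ {g 0}) :
    InjOn (concatPath f g a) (Icc 0 (a + b)) := by
  intro s hs t ht hst
  wlog hst' : s ≤ t generalizing s t
  · exact (this ht hs hst.symm (le_of_not_ge hst')).symm
  rcases le_or_gt t a with hta | hta
  · rw [concatPath_of_le hta, concatPath_of_le (hst'.trans hta)] at hst
    exact hf.injOn ⟨hs.1, hst'.trans hta⟩ ⟨ht.1, hta⟩ hst
  have ht' : t - a ∈ Icc 0 b := ⟨by linarith, by linarith [ht.2]⟩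
  rw [concatPath_of_lt hta] at hst
  rcases le_or_gt s a with hsa | hsa
  · rw [concatPath_of_le hsa] at hst
    have hv : g (t - a) = g 0 := hinter ⟨hst ▸ mem_image_of_mem f ⟨hs.1, hsa⟩,
      mem_image_of_mem g ht'⟩
    have := hg.injOn ht' (left_mem_Icc.2 (ht'.1.trans ht'.2)) hv
    linarith
  · rw [concatPath_of_lt hsa] at hst
    have := hg.injOn ⟨by linarith, by linarith [hs.2]⟩ ht' hst
    linarith

end IsGeodesicOn

lemma exists_isGreatest_eq_Icc {f g : ℝ → T} {m : ℝ} (hm : 0 ≤ m)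
    (hf : ContinuousOn f (Icc 0 m)) (hg : ContinuousOn g (Icc 0 m)) (h0 : f 0 = g 0) :
    ∃ c, IsGreatest {t ∈ Icc 0 m | f t = g t} c :=
  (isCompact_Icc.of_isClosed_subset (isClosed_Icc.isClosed_eq hf hg)
    (sep_subset _ _)).exists_isGreatest ⟨0, left_mem_Icc.2 hm, h0⟩

end Geodesic

variable {T : Type*} [MetricSpace T] [RTreeStruct T]

lemma exists_isGeodesicOn (x y : T) : ∃ γ : ℝ → T, IsGeodesicOn γ (dist x y) ∧ γ 0 = x ∧
    γ (dist x y) = y ∧ seg x y = γ '' Icc 0 (dist x y) :=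
  seg_geodesic x y

lemma seg_self (x : T) : seg x x = {x} := by
  obtain ⟨γ, -, hγ0, -, hseg⟩ := exists_isGeodesicOn x x
  rw [hseg, dist_self, Icc_self, image_singleton, hγ0]

lemma left_mem_seg (x y : T) : x ∈ seg x y := by
  obtain ⟨γ, -, hγ0, -, hseg⟩ := exists_isGeodesicOn x y
  exact hseg ▸ ⟨0, left_mem_Icc.2 dist_nonneg, hγ0⟩

lemma right_mem_seg (x y : T) : y ∈ seg x y := by
  obtain ⟨γ, -, -, hγy, hseg⟩ := exists_isGeodesicOn x y
  exact hseg ▸ ⟨dist x y, right_mem_Icc.2 dist_nonneg, hγy⟩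

lemma dist_add_of_mem_seg {x y v : T} (hv : v ∈ seg x y) : dist x v + dist v y = dist x y := by
  obtain ⟨γ, hγ, hγ0, hγy, hseg⟩ := exists_isGeodesicOn x y
  obtain ⟨t, ht, rfl⟩ := hseg ▸ hv
  have h0 := hγ.dist_apply_zero ht
  have h1 := hγ.dist_apply_right ht
  rw [hγ0] at h0
  rw [hγy] at h1
  linarith

lemma exists_mem_seg_dist_eq {x y : T} {t : ℝ} (ht : t ∈ Icc 0 (dist x y)) :
    ∃ w ∈ seg x y, dist x w = t := by
  obtain ⟨γ, hγ, hγ0, -, hseg⟩ := exists_isGeodesicOn x y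
  exact ⟨γ t, hseg ▸ mem_image_of_mem γ ht, hγ0 ▸ hγ.dist_apply_zero ht⟩

lemma image_Icc_eq_seg {f : ℝ → T} {L : ℝ} (hL : 0 ≤ L) (hc : ContinuousOn f (Icc 0 L))
    (hi : InjOn f (Icc 0 L)) : f '' Icc 0 L = seg (f 0) (f L) := by
  rcases hL.eq_or_lt with rfl | hL
  · rw [Icc_self, image_singleton, seg_self]
  have hscale : (· * L) '' Icc 0 1 = Icc 0 L := by
    rw [image_mul_right_Icc zero_le_one hL.le, zero_mul, one_mul]
  have hmaps : MapsTo (· * L) (Icc 0 1) (Icc 0 L) := hscale ▸ mapsTo_image _ _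
  rw [← hscale, image_image]
  simpa using arc_unique (f 0) (f L) (fun t => f (t * L))
    (hc.comp (continuous_mul_const L).continuousOn hmaps)
    (hi.comp (mul_left_injective₀ hL.ne').injOn hmaps) (by simp) (by simp)

lemma seg_eq_union_of_inter_subset {f g : ℝ → T} {a b : ℝ} {x v y : T}
    (hf : IsGeodesicOn f a) (hg : IsGeodesicOn g b) (ha : 0 ≤ a) (hb : 0 ≤ b)
    (hf0 : f 0 = x) (hfa : f a = v) (hg0 : g 0 = v) (hgb : g b = y)
    (hinter : f '' Icc 0 a ∩ g '' Icc 0 b ⊆ {v}) :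
    seg x y = f '' Icc 0 a ∪ g '' Icc 0 b := by
  have hfg : f a = g 0 := hfa.trans hg0.symm
  rw [← image_concatPath ha hb hfg]
  have h0 : concatPath f g a 0 = x := (concatPath_of_le ha).trans hf0
  have hab : concatPath f g a (a + b) = y := by
    rcases hb.eq_or_lt with rfl | hb
    · rw [add_zero, concatPath_of_le le_rfl, hfg, ← hgb]
    · rw [concatPath_of_lt (by linarith), add_sub_cancel_left, hgb]
  rw [image_Icc_eq_seg (add_nonneg ha hb) (hf.lipschitzOnWith_concatPath hg hfg).continuousOn
    (hf.injOn_concatPath hg (hg0 ▸ hinter)), h0, hab]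

lemma seg_eq_union_of_dist_add_eq {x v y : T} (h : dist x v + dist v y = dist x y) :
    seg x y = seg x v ∪ seg v y := by
  obtain ⟨f, hf, hf0, hfv, hfseg⟩ := exists_isGeodesicOn x v
  obtain ⟨g, hg, hg0, hgy, hgseg⟩ := exists_isGeodesicOn v y
  rw [hfseg, hgseg]
  refine seg_eq_union_of_inter_subset hf hg dist_nonneg dist_nonneg hf0 hfv hg0 hgy ?_
  rintro w ⟨hxv, hvy⟩
  rw [← hfseg] at hxv
  rw [← hgseg] at hvy
  have := dist_add_of_mem_seg hxv
  have := dist_add_of_mem_seg hvy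
  have := dist_triangle x w y
  have := dist_comm w v
  exact dist_le_zero.1 (by linarith)

lemma mem_seg_of_dist_add_eq {x v y : T} (h : dist x v + dist v y = dist x y) : v ∈ seg x y :=
  seg_eq_union_of_dist_add_eq h ▸ Or.inl (right_mem_seg x v)

lemma seg_eq_union_of_mem {x v y : T} (hv : v ∈ seg x y) : seg x y = seg x v ∪ seg v y :=
  seg_eq_union_of_dist_add_eq (dist_add_of_mem_seg hv)

/-- `p` is the branch point of the tripod spanned by `x`, `y` and `a`. -/
lemma exists_mem_seg_inter (x y a : T) : ∃ p ∈ seg x y, p ∈ seg x a ∧ p ∈ seg a y := by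
  obtain ⟨g, hg, hg0, hgy, hgseg⟩ := exists_isGeodesicOn x y
  obtain ⟨d, hd, hd0, hda, hdseg⟩ := exists_isGeodesicOn x a
  set D := dist x y
  set E := dist x a
  obtain ⟨c, ⟨⟨hc0, hcm⟩, hgdc⟩, hlast⟩ :=
    exists_isGreatest_eq_Icc (le_min dist_nonneg dist_nonneg)
    (hg.mono (min_le_left D E)).lipschitzOnWith.continuousOn
    (hd.mono (min_le_right D E)).lipschitzOnWith.continuousOn (hg0.trans hd0.symm)
  have hcD : c ≤ D := hcm.trans (min_le_left _ _)
  have hcE : c ≤ E := hcm.trans (min_le_right _ _)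
  refine ⟨g c, hgseg ▸ mem_image_of_mem g ⟨hc0, hcD⟩,
    hgdc ▸ hdseg ▸ mem_image_of_mem d ⟨hc0, hcE⟩, ?_⟩
  -- `c` is the last time at which `g` and `d` agree, so going back along `d` from `a` to `d c`
  -- and then along `g` to `y` gives an arc.
  have hseg := seg_eq_union_of_inter_subset (x := a) (v := g c) (y := y)
    (f := fun t => d (E - t)) (g := fun t => g (c + t)) (hd.reverse.mono (by linarith))
    (hg.shift hc0) (sub_nonneg.2 hcE) (sub_nonneg.2 hcD) (by simp [hda]) (by simp [hgdc])
    (by simp) (by simp [hgy]) ?_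
  · rw [hseg]
    exact Or.inr ⟨0, left_mem_Icc.2 (sub_nonneg.2 hcD), by simp⟩
  rintro w ⟨⟨s, hs, rfl⟩, ⟨t, ht, hts⟩⟩
  simp only at hts ⊢
  have hds : dist x (d (E - s)) = E - s :=
    hd0 ▸ hd.dist_apply_zero ⟨by linarith [hs.2], by linarith [hs.1]⟩
  have hgt : dist x (g (c + t)) = c + t :=
    hg0 ▸ hg.dist_apply_zero ⟨by linarith [ht.1], by linarith [ht.2]⟩
  have hst : E - s = c + t := by rw [← hds, ← hts, hgt]
  have hct : c + t ≤ c := hlast ⟨⟨by linarith [ht.1], le_min (by linarith [ht.2])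
    (by linarith [hs.1])⟩, hts.trans (congrArg d hst)⟩
  rw [mem_singleton_iff, ← hts, le_antisymm (by linarith) ht.1, add_zero]

lemma seg_subset_union_seg (x y a : T) : seg x y ⊆ seg x a ∪ seg a y := by
  obtain ⟨p, hpxy, hpxa, hpay⟩ := exists_mem_seg_inter x y a
  rw [seg_eq_union_of_mem hpxy, seg_eq_union_of_mem hpxa, seg_eq_union_of_mem hpay]
  exact union_subset_union subset_union_left subset_union_right

lemma dist_eq_max_of_mem_seg {x y v : T} (hv : v ∈ seg x y) (a : T) :
    dist a v = max (dist a x - dist x v) (dist a y - dist v y) := by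
  refine le_antisymm ?_ (max_le ?_ ?_)
  · rcases seg_subset_union_seg x y a hv with hxa | hay
    · have := dist_add_of_mem_seg hxa
      have := dist_comm x a
      have := dist_comm v a
      exact le_max_of_le_left (by linarith)
    · have := dist_add_of_mem_seg hay
      exact le_max_of_le_right (by linarith)
  · linarith [dist_triangle a v x, dist_comm v x]
  · linarith [dist_triangle a v y]

lemma dist_eq_of_mem_seg_of_mem_seg {x y x' y' v v' : T} (hv : v ∈ seg x y)
    (hv' : v' ∈ seg x' y') :
    dist v v' = max (max (dist x' x - dist x v) (dist x' y - dist v y) - dist x' v')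
      (max (dist y' x - dist x v) (dist y' y - dist v y) - dist v' y') := by
  rw [dist_eq_max_of_mem_seg hv' v, dist_comm v x', dist_comm v y',
    dist_eq_max_of_mem_seg hv x', dist_eq_max_of_mem_seg hv y']

def span (A : Set T) : Set T :=
  ⋃ x ∈ A, ⋃ y ∈ A, seg x y

lemma mem_span {A : Set T} {v : T} : v ∈ span A ↔ ∃ x ∈ A, ∃ y ∈ A, v ∈ seg x y := by
  simp only [span, mem_iUnion, exists_prop]

lemma subset_span {A : Set T} : A ⊆ span A :=
  fun x hx => mem_span.2 ⟨x, hx, x, hx, left_mem_seg x x⟩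

section Extension

variable {T' : Type*} [MetricSpace T'] [RTreeStruct T'] {A : Set T} {φ : T → T'}

/-- `Corresponds A φ v w` says that `w` is the point `w_v` of the statement, computed from some
`x, y ∈ A` with `v ∈ [x, y]`. -/
def Corresponds (A : Set T) (φ : T → T') (v : T) (w : T') : Prop :=
  ∃ x ∈ A, ∃ y ∈ A, v ∈ seg x y ∧ w ∈ seg (φ x) (φ y) ∧ dist (φ x) w = dist x v

lemma corresponds_self {x : T} (hx : x ∈ A) : Corresponds A φ x (φ x) :=
  ⟨x, hx, x, hx, left_mem_seg x x, left_mem_seg _ _, by rw [dist_self, dist_self]⟩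

lemma corresponds_of_eqOn_of_dist_eq {ψ : T → T'} (hψ : EqOn ψ φ A)
    (hdist : ∀ v ∈ span A, ∀ w ∈ span A, dist (ψ v) (ψ w) = dist v w) {v : T}
    (hv : v ∈ span A) : Corresponds A φ v (ψ v) := by
  obtain ⟨x, hx, y, hy, hvxy⟩ := mem_span.1 hv
  have hxv : dist (φ x) (ψ v) = dist x v := hψ hx ▸ hdist x (subset_span hx) v hv
  have hvy : dist (ψ v) (φ y) = dist v y := hψ hy ▸ hdist v hv y (subset_span hy)
  have hxy : dist (φ x) (φ y) = dist x y :=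
    hψ hx ▸ hψ hy ▸ hdist x (subset_span hx) y (subset_span hy)
  refine ⟨x, hx, y, hy, hvxy, mem_seg_of_dist_add_eq ?_, hxv⟩
  rw [hxv, hvy, hxy, dist_add_of_mem_seg hvxy]

open Classical in
noncomputable def spanExtension (A : Set T) (φ : T → T') (v : T) : T' :=
  if h : ∃ w, Corresponds A φ v w then h.choose else φ v

variable (hφ : ∀ x ∈ A, ∀ y ∈ A, dist (φ x) (φ y) = dist x y)
include hφ

lemma exists_corresponds {v : T} (hv : v ∈ span A) : ∃ w, Corresponds A φ v w := by
  obtain ⟨x, hx, y, hy, hv⟩ := mem_span.1 hv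
  have hxv : dist x v ∈ Icc 0 (dist (φ x) (φ y)) :=
    ⟨dist_nonneg, hφ x hx y hy ▸ dist_add_of_mem_seg hv ▸ le_add_of_nonneg_right dist_nonneg⟩
  obtain ⟨w, hw, hxw⟩ := exists_mem_seg_dist_eq hxv
  exact ⟨w, x, hx, y, hy, hv, hw, hxw⟩

/-- Distances between points of `span A` are determined by the distances within `A` and the
positions on the segments, and `φ` preserves all of these data. -/
lemma Corresponds.dist_eq {v v' : T} {w w' : T'} (h : Corresponds A φ v w)
    (h' : Corresponds A φ v' w') : dist w w' = dist v v' := by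
  obtain ⟨x, hx, y, hy, hv, hw, hxw⟩ := h
  obtain ⟨x', hx', y', hy', hv', hw', hxw'⟩ := h'
  have hwy : dist w (φ y) = dist v y := by
    linarith [dist_add_of_mem_seg hv, dist_add_of_mem_seg hw, hφ x hx y hy]
  have hwy' : dist w' (φ y') = dist v' y' := by
    linarith [dist_add_of_mem_seg hv', dist_add_of_mem_seg hw', hφ x' hx' y' hy']
  rw [dist_eq_of_mem_seg_of_mem_seg hw hw', dist_eq_of_mem_seg_of_mem_seg hv hv',
    hφ x' hx' x hx, hφ x' hx' y hy, hφ y' hy' x hx, hφ y' hy' y hy, hxw, hxw', hwy, hwy']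

lemma Corresponds.eq {v : T} {w w' : T'} (h : Corresponds A φ v w)
    (h' : Corresponds A φ v w') : w = w' :=
  dist_eq_zero.1 ((h.dist_eq hφ h').trans (dist_self v))

lemma corresponds_spanExtension {v : T} (hv : v ∈ span A) :
    Corresponds A φ v (spanExtension A φ v) := by
  have h := exists_corresponds hφ hv
  rw [spanExtension, dif_pos h]
  exact h.choose_spec

end Extension

end RTreeStruct

theorem isometry_extends_to_span_general {T T' : Type*}
    [MetricSpace T] [RTreeStruct T] [MetricSpace T'] [RTreeStruct T']
    (A : Set T) (φ : T → T')
    (hiso : ∀ x ∈ A, ∀ y ∈ A, dist (φ x) (φ y) = dist x y) :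
    (∀ v x y x' y' w w', x ∈ A → y ∈ A → x' ∈ A → y' ∈ A →
        v ∈ RTreeStruct.seg x y → v ∈ RTreeStruct.seg x' y' →
        w ∈ RTreeStruct.seg (φ x) (φ y) → w' ∈ RTreeStruct.seg (φ x') (φ y') →
        dist (φ x) w = dist x v → dist (φ x') w' = dist x' v → w = w') ∧
    ∃ ψ : T → T',
      (Set.EqOn ψ φ A) ∧
      (∀ v ∈ ⋃ x ∈ A, ⋃ y ∈ A, RTreeStruct.seg x y,
        ∀ w ∈ ⋃ x ∈ A, ⋃ y ∈ A, RTreeStruct.seg x y,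
          dist (ψ v) (ψ w) = dist v w) ∧
      (ψ '' (⋃ x ∈ A, ⋃ y ∈ A, RTreeStruct.seg x y)
        ⊆ ⋃ x ∈ A, ⋃ y ∈ A, RTreeStruct.seg (φ x) (φ y)) ∧
      (∀ ψ' : T → T',
        Set.EqOn ψ' φ A →
        (∀ v ∈ ⋃ x ∈ A, ⋃ y ∈ A, RTreeStruct.seg x y,
          ∀ w ∈ ⋃ x ∈ A, ⋃ y ∈ A, RTreeStruct.seg x y,
            dist (ψ' v) (ψ' w) = dist v w) →
        (ψ' '' (⋃ x ∈ A, ⋃ y ∈ A, RTreeStruct.seg x y)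
          ⊆ ⋃ x ∈ A, ⋃ y ∈ A, RTreeStruct.seg (φ x) (φ y)) →
        Set.EqOn ψ' ψ (⋃ x ∈ A, ⋃ y ∈ A, RTreeStruct.seg x y)) := by
  open RTreeStruct in
  refine ⟨fun v x y x' y' w w' hx hy hx' hy' hv hv' hw hw' hxw hxw' =>
      Corresponds.eq hiso ⟨x, hx, y, hy, hv, hw, hxw⟩ ⟨x', hx', y', hy', hv', hw', hxw'⟩,
    spanExtension A φ, fun x hx => ?_, fun v hv w hw => ?_, ?_,
    fun ψ' hψ' hdist _ v hv => ?_⟩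
  · exact (corresponds_spanExtension hiso (subset_span hx)).eq hiso (corresponds_self hx)
  · exact (corresponds_spanExtension hiso hv).dist_eq hiso (corresponds_spanExtension hiso hw)
  · rintro _ ⟨v, hv, rfl⟩
    obtain ⟨x, hx, y, hy, -, hw, -⟩ := corresponds_spanExtension hiso hv
    exact Set.mem_iUnion₂_of_mem hx (Set.mem_iUnion₂_of_mem hy hw)
  · exact (corresponds_of_eqOn_of_dist_eq hψ' hdist hv).eq hiso
      (corresponds_spanExtension hiso hv)

/-- an isometry `φ : A → A'` between subsets of ℝ-trees extends
uniquely to an isometry of the spanned subtrees: for `v ∈ span(A)` with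
`v ∈ [x,y]`, `x,y ∈ A`, the point `w_v ∈ [φ(x),φ(y)]` with `r(x,v) = r'(φ(x),w_v)`
is independent of the choice of `x,y`, and `v ↦ w_v` is the unique isometric
extension `span(A) → span(A')`. -/
theorem isometry_extends_to_span {T T' : Type*}
    [MetricSpace T] [RTreeStruct T] [MetricSpace T'] [RTreeStruct T']
    (A : Set T) (hA : A.Nonempty) (φ : T → T')
    (hiso : ∀ x ∈ A, ∀ y ∈ A, dist (φ x) (φ y) = dist x y) :
    (∀ v x y x' y' w w', x ∈ A → y ∈ A → x' ∈ A → y' ∈ A →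
        v ∈ RTreeStruct.seg x y → v ∈ RTreeStruct.seg x' y' →
        w ∈ RTreeStruct.seg (φ x) (φ y) → w' ∈ RTreeStruct.seg (φ x') (φ y') →
        dist (φ x) w = dist x v → dist (φ x') w' = dist x' v → w = w') ∧
    ∃ ψ : T → T',
      (Set.EqOn ψ φ A) ∧
      (∀ v ∈ ⋃ x ∈ A, ⋃ y ∈ A, RTreeStruct.seg x y,
        ∀ w ∈ ⋃ x ∈ A, ⋃ y ∈ A, RTreeStruct.seg x y,
          dist (ψ v) (ψ w) = dist v w) ∧
      (ψ '' (⋃ x ∈ A, ⋃ y ∈ A, RTreeStruct.seg x y)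
        ⊆ ⋃ x ∈ A, ⋃ y ∈ A, RTreeStruct.seg (φ x) (φ y)) ∧
      (∀ ψ' : T → T',
        Set.EqOn ψ' φ A →
        (∀ v ∈ ⋃ x ∈ A, ⋃ y ∈ A, RTreeStruct.seg x y,
          ∀ w ∈ ⋃ x ∈ A, ⋃ y ∈ A, RTreeStruct.seg x y,
            dist (ψ' v) (ψ' w) = dist v w) →
        (ψ' '' (⋃ x ∈ A, ⋃ y ∈ A, RTreeStruct.seg x y)
          ⊆ ⋃ x ∈ A, ⋃ y ∈ A, RTreeStruct.seg (φ x) (φ y)) →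
        Set.EqOn ψ' ψ (⋃ x ∈ A, ⋃ y ∈ A, RTreeStruct.seg x y)) :=
  isometry_extends_to_span_general A φ hiso
end

section
/- Let (μ_N)_{N∈ℕ} be a sequence of finite Borel measures on a common metric space that is uniformly bounded in total mass and converges setwise to a finite measure μ_∞ (i.e. μ_N(A) → μ_∞(A) for every Borel set A). Let (f_N) be uniformly bounded measurable functions converging pointwise to f on a set G whose complement B is μ_∞-null. Then ∫ f_N dμ_N → ∫ f dμ_∞, provided additionally μ_N(B) → μ_∞(B) = 0. -/
/-!
For a bounded measurable `h ≥ 0`, the layer-cake formula `∫ h dν = ∫_0^∞ ν {h > t} dt` turns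
setwise convergence into dominated convergence in `t`, so `∫ h dμ_N → ∫ h dμ_∞`.
Replacing `g` by its truncation at level `M` changes it only on the `μ_∞`-null set `B`. The
tail suprema `φ_m = sup_{k ≥ m} |f_k - g|` are bounded measurable functions, so
`limsup_N ∫ |f_N - g| dμ_N ≤ lim_N ∫ φ_m dμ_N = ∫ φ_m dμ_∞`, which tends to `0` as `m → ∞` by
dominated convergence, since `φ_m → 0` `μ_∞`-almost everywhere.
-/

open MeasureTheory Filter Set Topology
open scoped ENNReal

theorem tendsto_zero_of_forall_eventually_le {ι κ : Type*} {l : Filter ι} {l' : Filter κ}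
    [l'.NeBot] {a : ι → ℝ} {b : κ → ι → ℝ} {c : κ → ℝ} (ha : ∀ i, 0 ≤ a i)
    (hab : ∀ k, ∀ᶠ i in l, a i ≤ b k i) (hb : ∀ k, Tendsto (b k) l (𝓝 (c k)))
    (hc : Tendsto c l' (𝓝 0)) : Tendsto a l (𝓝 0) := by
  refine tendsto_order.2 ⟨fun ε hε => .of_forall fun i => hε.trans_le (ha i), fun ε hε => ?_⟩
  obtain ⟨k, hk⟩ := (hc.eventually (gt_mem_nhds hε)).exists
  filter_upwards [hab k, (hb k).eventually (gt_mem_nhds hk)] with i h₁ h₂ using h₁.trans_lt h₂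

theorem tendsto_iSup_add_of_tendsto_zero {u : ℕ → ℝ} (hu : Tendsto u atTop (𝓝 0))
    (hu₀ : ∀ k, 0 ≤ u k) : Tendsto (fun m => ⨆ k, u (m + k)) atTop (𝓝 0) := by
  refine tendsto_order.2
    ⟨fun ε hε => .of_forall fun m => hε.trans_le (Real.iSup_nonneg fun k => hu₀ _), fun ε hε => ?_⟩
  obtain ⟨K, hK⟩ := eventually_atTop.1 (hu.eventually (gt_mem_nhds (half_pos hε)))
  filter_upwards [eventually_ge_atTop K] with m hm
  exact (ciSup_le fun k => (hK _ (by omega)).le).trans_lt (half_lt_self hε)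

section Setwise

variable {X ι : Type*} [MeasurableSpace X] {μ : ι → Measure X} {μ' : Measure X} {l : Filter ι}
  [l.IsCountablyGenerated] [∀ i, IsFiniteMeasure (μ i)] [IsFiniteMeasure μ']

theorem tendsto_integral_of_setwise_of_nonneg
    (hset : ∀ A, MeasurableSet A → Tendsto (fun i => μ i A) l (𝓝 (μ' A)))
    {h : X → ℝ} (hh : Measurable h) {K : ℝ} (h₀ : ∀ x, 0 ≤ h x) (hK : ∀ x, h x ≤ K) :
    Tendsto (fun i => ∫ x, h x ∂μ i) l (𝓝 (∫ x, h x ∂μ')) := by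
  have layercake : ∀ (ν : Measure X) [IsFiniteMeasure ν],
      ∫ x, h x ∂ν = ∫ t in Ioi 0, ν.real {x | t < h x} := fun ν _ =>
    (Integrable.of_bound hh.aestronglyMeasurable K (.of_forall fun x => by
      rw [Real.norm_of_nonneg (h₀ x)]; exact hK x)).integral_eq_integral_meas_lt (.of_forall h₀)
  simp only [layercake]
  have hmass : ∀ᶠ i in l, (μ i).real univ ≤ μ'.real univ + 1 :=
    ((ENNReal.tendsto_toReal (measure_ne_top _ _)).comp (hset _ .univ)).eventually_le_const
      (lt_add_one _)
  refine tendsto_integral_filter_of_dominated_convergence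
    ((Iio K).indicator fun _ => μ'.real univ + 1) (.of_forall fun i => ?_) ?_ ?_ ?_
  · exact (Antitone.measurable (f := fun t => (μ i).real {x | t < h x}) fun s t hst =>
      measureReal_mono fun x hx => hst.trans_lt hx).aestronglyMeasurable
  · filter_upwards [hmass] with i hi
    refine .of_forall fun t => ?_
    by_cases ht : t ∈ Iio K
    · rw [indicator_of_mem ht, Real.norm_of_nonneg measureReal_nonneg]
      exact (measureReal_mono (subset_univ _)).trans hi
    · have : {x | t < h x} = ∅ := eq_empty_of_forall_notMem fun x hx => ht (hx.trans_le (hK x))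
      simp [this, indicator_of_notMem ht]
  · refine (integrableOn_const ?_).integrable_indicator measurableSet_Iio
    rw [Measure.restrict_apply measurableSet_Iio, Iio_inter_Ioi]
    exact measure_Ioo_lt_top.ne
  · exact .of_forall fun t =>
      (ENNReal.tendsto_toReal (measure_ne_top _ _)).comp (hset _ (measurableSet_lt measurable_const hh))

theorem tendsto_integral_of_setwise
    (hset : ∀ A, MeasurableSet A → Tendsto (fun i => μ i A) l (𝓝 (μ' A)))
    {h : X → ℝ} (hh : Measurable h) {K : ℝ} (hK : ∀ x, |h x| ≤ K) :
    Tendsto (fun i => ∫ x, h x ∂μ i) l (𝓝 (∫ x, h x ∂μ')) := by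
  have posPart : ∀ u : X → ℝ, Measurable u → (∀ x, |u x| ≤ K) →
      Tendsto (fun i => ∫ x, ((u x).toNNReal : ℝ) ∂μ i) l (𝓝 (∫ x, ((u x).toNNReal : ℝ) ∂μ')) :=
    fun u hu huK => tendsto_integral_of_setwise_of_nonneg hset hu.real_toNNReal.coe_nnreal_real
      (fun x => NNReal.coe_nonneg _) fun x => by
        rw [Real.coe_toNNReal']
        exact max_le ((le_abs_self _).trans (huK x)) ((abs_nonneg _).trans (huK x))
  have hint : ∀ (ν : Measure X) [IsFiniteMeasure ν], Integrable h ν := fun ν _ =>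
    .of_bound hh.aestronglyMeasurable K (.of_forall hK)
  rw [integral_eq_integral_pos_part_sub_integral_neg_part (hint μ')]
  refine ((posPart h hh hK).sub (posPart (-h) hh.neg fun x => ?_)).congr fun i =>
    (integral_eq_integral_pos_part_sub_integral_neg_part (hint (μ i))).symm
  simpa using hK x

end Setwise

section Sequence

variable {X : Type*} [MeasurableSpace X] {μ : ℕ → Measure X} {μ' : Measure X}
  [∀ N, IsFiniteMeasure (μ N)] [IsFiniteMeasure μ']

theorem tendsto_integral_abs_sub_of_setwise
    (hset : ∀ A, MeasurableSet A → Tendsto (fun N => μ N A) atTop (𝓝 (μ' A)))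
    {f : ℕ → X → ℝ} {h : X → ℝ} (hf : ∀ N, Measurable (f N)) (hh : Measurable h) {K : ℝ}
    (hfK : ∀ N x, |f N x| ≤ K) (hhK : ∀ x, |h x| ≤ K)
    (hlim : ∀ᵐ x ∂μ', Tendsto (fun N => f N x) atTop (𝓝 (h x))) :
    Tendsto (fun N => ∫ x, |f N x - h x| ∂μ N) atTop (𝓝 0) := by
  set φ : ℕ → X → ℝ := fun m x => ⨆ k, |f (m + k) x - h x|
  have hdiff : ∀ N x, |f N x - h x| ≤ 2 * K := fun N x =>
    (abs_sub _ _).trans (by linarith [hfK N x, hhK x])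
  have hφ_meas : ∀ m, Measurable (φ m) := fun m => .iSup fun k => ((hf _).sub hh).abs
  have hφ_abs : ∀ m x, |φ m x| ≤ 2 * K := fun m x => by
    rw [abs_of_nonneg (Real.iSup_nonneg fun k => abs_nonneg _)]
    exact ciSup_le fun k => hdiff _ x
  have hint : ∀ (ν : Measure X) [IsFiniteMeasure ν] (u : X → ℝ), Measurable u →
      (∀ x, |u x| ≤ 2 * K) → Integrable u ν := fun ν _ u hu huK =>
    .of_bound hu.aestronglyMeasurable _ (.of_forall huK)
  have hle : ∀ m, ∀ᶠ N in atTop, ∫ x, |f N x - h x| ∂μ N ≤ ∫ x, φ m x ∂μ N := fun m => by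
    filter_upwards [eventually_ge_atTop m] with N hN
    refine integral_mono (hint _ _ ((hf N).sub hh).abs fun x => by simpa using hdiff N x)
      (hint _ _ (hφ_meas m) (hφ_abs m)) fun x => ?_
    have := le_ciSup ⟨2 * K, forall_mem_range.2 fun k => hdiff (m + k) x⟩ (N - m)
    rwa [Nat.add_sub_cancel' hN] at this
  have hφ_ae : ∀ᵐ x ∂μ', Tendsto (fun m => φ m x) atTop (𝓝 0) := hlim.mono fun x hx => by
    have hx' : Tendsto (fun k => |f k x - h x|) atTop (𝓝 0) := by
      simpa using (tendsto_sub_nhds_zero_iff.2 hx).abs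
    exact tendsto_iSup_add_of_tendsto_zero hx' fun k => abs_nonneg _
  have hφ_lim : Tendsto (fun m => ∫ x, φ m x ∂μ') atTop (𝓝 0) := by
    simpa using tendsto_integral_of_dominated_convergence (f := fun _ => 0) (fun _ => 2 * K)
      (fun m => (hφ_meas m).aestronglyMeasurable) (integrable_const _)
      (fun m => .of_forall (hφ_abs m)) hφ_ae
  exact tendsto_zero_of_forall_eventually_le (fun N => integral_nonneg fun x => abs_nonneg _) hle
    (fun m => tendsto_integral_of_setwise hset (hφ_meas m) (hφ_abs m)) hφ_lim

theorem tendsto_integral_of_setwise_of_ae_tendsto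
    (hset : ∀ A, MeasurableSet A → Tendsto (fun N => μ N A) atTop (𝓝 (μ' A)))
    {f : ℕ → X → ℝ} {h : X → ℝ} (hf : ∀ N, Measurable (f N)) (hh : Measurable h) {K : ℝ}
    (hfK : ∀ N x, |f N x| ≤ K) (hhK : ∀ x, |h x| ≤ K)
    (hlim : ∀ᵐ x ∂μ', Tendsto (fun N => f N x) atTop (𝓝 (h x))) :
    Tendsto (fun N => ∫ x, f N x ∂μ N) atTop (𝓝 (∫ x, h x ∂μ')) := by
  have hgap : Tendsto (fun N => ∫ x, f N x ∂μ N - ∫ x, h x ∂μ N) atTop (𝓝 0) := by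
    refine squeeze_zero_norm (fun N => ?_)
      (tendsto_integral_abs_sub_of_setwise hset hf hh hfK hhK hlim)
    rw [← integral_sub (.of_bound (hf N).aestronglyMeasurable K (.of_forall (hfK N)))
      (.of_bound hh.aestronglyMeasurable K (.of_forall hhK))]
    simpa only [Real.norm_eq_abs] using norm_integral_le_integral_norm (fun x => f N x - h x)
  simpa using hgap.add (tendsto_integral_of_setwise hset hh hhK)

end Sequence

theorem setwise_convergence_integral_general {X : Type*}
    [MeasurableSpace X]
    (μ : ℕ → Measure X) (μ' : Measure X)
    [∀ N, IsFiniteMeasure (μ N)] [IsFiniteMeasure μ']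
    (hset : ∀ A : Set X, MeasurableSet A →
      Tendsto (fun N => μ N A) atTop (nhds (μ' A)))
    (f : ℕ → X → ℝ) (g : X → ℝ)
    (hfm : ∀ N, Measurable (f N)) (hgm : Measurable g)
    (M : ℝ) (hub : ∀ N x, |f N x| ≤ M)
    (G B : Set X) (hB : B = Gᶜ)
    (hconv : ∀ x ∈ G, Tendsto (fun N => f N x) atTop (nhds (g x)))
    (hBnull : μ' B = 0) :
    Tendsto (fun N => ∫ x, f N x ∂(μ N)) atTop (nhds (∫ x, g x ∂μ')) := by
  set h : X → ℝ := fun x => max (-M) (min (g x) M)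
  have hG : ∀ x ∈ G, h x = g x := fun x hx => by
    have hgM := abs_le.1 (le_of_tendsto' (hconv x hx).abs fun N => hub N x)
    simp only [h, min_eq_left hgM.2, max_eq_right hgM.1]
  have hhM : ∀ x, |h x| ≤ M := fun x => by
    have hM : 0 ≤ M := (abs_nonneg _).trans (hub 0 x)
    exact abs_le.2 ⟨le_max_left _ _, max_le (by linarith) (min_le_right _ _)⟩
  have hae : ∀ᵐ x ∂μ', x ∈ G := mem_ae_iff.2 (hB ▸ hBnull)
  rw [← integral_congr_ae (hae.mono hG)]
  exact tendsto_integral_of_setwise_of_ae_tendsto hset hfm (by fun_prop) hub hhM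
    (hae.mono fun x hx => hG x hx ▸ hconv x hx)

/-- if finite measures `μ_N` with uniformly bounded masses converge
setwise to `μ_∞`, and uniformly bounded measurable `f_N → f` pointwise outside a
set `B` with `μ_∞(B) = 0` and `μ_N(B) → 0`, then `∫ f_N dμ_N → ∫ f dμ_∞`. -/
theorem setwise_convergence_integral {X : Type*}
    [MetricSpace X] [MeasurableSpace X] [BorelSpace X]
    (μ : ℕ → Measure X) (μ' : Measure X)
    [∀ N, IsFiniteMeasure (μ N)] [IsFiniteMeasure μ']
    (hbd : ∃ C : ℝ≥0∞, C < ∞ ∧ ∀ N, μ N Set.univ ≤ C)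
    (hset : ∀ A : Set X, MeasurableSet A →
      Tendsto (fun N => μ N A) atTop (nhds (μ' A)))
    (f : ℕ → X → ℝ) (g : X → ℝ)
    (hfm : ∀ N, Measurable (f N)) (hgm : Measurable g)
    (M : ℝ) (hub : ∀ N x, |f N x| ≤ M)
    (G B : Set X) (hB : B = Gᶜ)
    (hconv : ∀ x ∈ G, Tendsto (fun N => f N x) atTop (nhds (g x)))
    (hBnull : μ' B = 0)
    (hμNB : Tendsto (fun N => μ N B) atTop (nhds 0)) :
    Tendsto (fun N => ∫ x, f N x ∂(μ N)) atTop (nhds (∫ x, g x ∂μ')) :=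
  setwise_convergence_integral_general μ μ' hset f g hfm hgm M hub G B hB hconv hBnull
end
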